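/- Every kind, family, and object typable in LF_Δ is strongly normalizing with respect to →_Δ: if Γ ⊢_Σ K then K is strongly normalizing; if Γ ⊢_Σ σ : K then σ is strongly normalizing; if Γ ⊢_Σ Δ : σ then Δ is strongly normalizing. -/

import Mathlib

set_option autoImplicit false

namespace LFDelta

/-- Equivalence closure of a relation (conversion). -/
inductive Conv {α : Type} (r : α → α → Prop) : α → α → Prop
| rel {a b : α} : r a b → Conv r a b
| refl (a : α) : Conv r a a
| symm {a b : α} : Conv r a b → Conv r b a
| trans {a b c : α} : Conv r a b → Conv r b c → Conv r a c

/-- Types of the intersection-union type assignment system B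
    (with ⊤, used only for the extended system B⁺). -/
inductive BTy : Type
| atom (a : ℕ)
| top
| arr (σ τ : BTy)
| inter (σ τ : BTy)
| union (σ τ : BTy)
deriving DecidableEq

/-- ω-free types of system B. -/
def BTy.OmegaFree : BTy → Prop
| .atom _ => True
| .top => False
| .arr σ τ => σ.OmegaFree ∧ τ.OmegaFree
| .inter σ τ => σ.OmegaFree ∧ τ.OmegaFree
| .union σ τ => σ.OmegaFree ∧ τ.OmegaFree

/-- Untyped λ-terms (de Bruijn), possibly containing constants
    (the constants c, c_× and c_{|σ|} are used for translations). -/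
inductive Lam : Type
| var (n : ℕ)
| app (M N : Lam)
| lam (M : Lam)
| const (c : ℕ)
| cx
| cty (σ : BTy)
deriving DecidableEq

namespace Lam

/-- Pure λ-terms: no constants. -/
def Pure : Lam → Prop
| .var _ => True
| .app M N => Pure M ∧ Pure N
| .lam M => Pure M
| _ => False

/-- Lift (shift) free variables ≥ c by one. -/
def lift (c : ℕ) : Lam → Lam
| .var n => if n < c then .var n else .var (n+1)
| .app M N => .app (lift c M) (lift c N)
| .lam M => .lam (lift (c+1) M)
| .const k => .const k
| .cx => .cx
| .cty σ => .cty σ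

/-- Substitute N for variable k. -/
def subst (k : ℕ) (N : Lam) : Lam → Lam
| .var n => if n < k then .var n else if n = k then (lift 0)^[k] N else .var (n-1)
| .app M₁ M₂ => .app (subst k N M₁) (subst k N M₂)
| .lam M => .lam (subst (k+1) N M)
| .const c => .const c
| .cx => .cx
| .cty σ => .cty σ

/-- One-step β-reduction. -/
inductive StepB : Lam → Lam → Prop
| beta {M N : Lam} : StepB (.app (.lam M) N) (subst 0 N M)
| appL {M M' N : Lam} : StepB M M' → StepB (.app M N) (.app M' N)
| appR {M N N' : Lam} : StepB N N' → StepB (.app M N) (.app M N')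
| lam {M M' : Lam} : StepB M M' → StepB (.lam M) (.lam M')

/-- One-step η-reduction. -/
inductive StepE : Lam → Lam → Prop
| eta {M : Lam} : StepE (.lam (.app (lift 0 M) (.var 0))) M
| appL {M M' N : Lam} : StepE M M' → StepE (.app M N) (.app M' N)
| appR {M N N' : Lam} : StepE N N' → StepE (.app M N) (.app M N')
| lam {M M' : Lam} : StepE M M' → StepE (.lam M) (.lam M')

/-- β-convertibility. -/
def BetaEq : Lam → Lam → Prop := Conv StepB

/-- βη-convertibility. -/
def BetaEtaEq : Lam → Lam → Prop := Conv (fun a b => StepB a b ∨ StepE a b)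

/-- Strong β-normalization. -/
def SNBeta (M : Lam) : Prop := Acc (fun a b => StepB b a) M

end Lam

/-- The subtype theory Ξ of system B without the ω-axioms (5) and (13),
    i.e. axioms/rules (1)-(4), (6)-(12), (14). -/
inductive SubB : BTy → BTy → Prop
| idemInter {σ : BTy} : SubB σ (.inter σ σ)                                  -- (1)
| idemUnion {σ : BTy} : SubB (.union σ σ) σ                                  -- (2)
| interL {σ τ : BTy} : SubB (.inter σ τ) σ                                   -- (3)
| interR {σ τ : BTy} : SubB (.inter σ τ) τ                                   -- (3)
| unionL {σ τ : BTy} : SubB σ (.union σ τ)                                   -- (4)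
| unionR {σ τ : BTy} : SubB τ (.union σ τ)                                   -- (4)
| refl {σ : BTy} : SubB σ σ                                                  -- (6)
| monoInter {σ₁ σ₂ τ₁ τ₂ : BTy} :
    SubB σ₁ σ₂ → SubB τ₁ τ₂ → SubB (.inter σ₁ τ₁) (.inter σ₂ τ₂)             -- (7)
| monoUnion {σ₁ σ₂ τ₁ τ₂ : BTy} :
    SubB σ₁ σ₂ → SubB τ₁ τ₂ → SubB (.union σ₁ τ₁) (.union σ₂ τ₂)             -- (8)
| trans {σ τ ρ : BTy} : SubB σ τ → SubB τ ρ → SubB σ ρ                        -- (9)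
| dist {σ τ ρ : BTy} :
    SubB (.inter σ (.union τ ρ)) (.union (.inter σ τ) (.inter σ ρ))          -- (10)
| arrInter {σ τ ρ : BTy} :
    SubB (.inter (.arr σ τ) (.arr σ ρ)) (.arr σ (.inter τ ρ))                -- (11)
| arrUnion {σ τ ρ : BTy} :
    SubB (.inter (.arr σ ρ) (.arr τ ρ)) (.arr (.union σ τ) ρ)                -- (12)
| arrow {σ₁ σ₂ τ₁ τ₂ : BTy} :
    SubB σ₂ σ₁ → SubB τ₁ τ₂ → SubB (.arr σ₁ τ₁) (.arr σ₂ τ₂)                  -- (14)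

/-- The subtype theory Ξ' (Ξ without (5), (10), (13)), parametrized by
    additional axioms `ax`. -/
inductive Xi' (ax : BTy → BTy → Prop) : BTy → BTy → Prop
| ax {σ τ : BTy} : ax σ τ → Xi' ax σ τ
| idemInter {σ : BTy} : Xi' ax σ (.inter σ σ)
| idemUnion {σ : BTy} : Xi' ax (.union σ σ) σ
| interL {σ τ : BTy} : Xi' ax (.inter σ τ) σ
| interR {σ τ : BTy} : Xi' ax (.inter σ τ) τ
| unionL {σ τ : BTy} : Xi' ax σ (.union σ τ)
| unionR {σ τ : BTy} : Xi' ax τ (.union σ τ)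
| refl {σ : BTy} : Xi' ax σ σ
| monoInter {σ₁ σ₂ τ₁ τ₂ : BTy} :
    Xi' ax σ₁ σ₂ → Xi' ax τ₁ τ₂ → Xi' ax (.inter σ₁ τ₁) (.inter σ₂ τ₂)
| monoUnion {σ₁ σ₂ τ₁ τ₂ : BTy} :
    Xi' ax σ₁ σ₂ → Xi' ax τ₁ τ₂ → Xi' ax (.union σ₁ τ₁) (.union σ₂ τ₂)
| trans {σ τ ρ : BTy} : Xi' ax σ τ → Xi' ax τ ρ → Xi' ax σ ρ
| arrInter {σ τ ρ : BTy} :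
    Xi' ax (.inter (.arr σ τ) (.arr σ ρ)) (.arr σ (.inter τ ρ))
| arrUnion {σ τ ρ : BTy} :
    Xi' ax (.inter (.arr σ ρ) (.arr τ ρ)) (.arr (.union σ τ) ρ)
| arrow {σ₁ σ₂ τ₁ τ₂ : BTy} :
    Xi' ax σ₂ σ₁ → Xi' ax τ₁ τ₂ → Xi' ax (.arr σ₁ τ₁) (.arr σ₂ τ₂)

/-- Type assignment of system B (Curry style), extended with constant
    typing axioms `ξ` and the constants c_× and c_{|σ|} of B⁺.
    With `ξ := fun _ _ => False` and on pure terms this is exactly system B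
    without ω. -/
inductive BPlus (ξ : ℕ → BTy → Prop) : List BTy → Lam → BTy → Prop
| var {Γ : List BTy} {n : ℕ} {σ : BTy} :
    Γ[n]? = some σ → BPlus ξ Γ (.var n) σ
| const {Γ : List BTy} {c : ℕ} {σ : BTy} : ξ c σ → BPlus ξ Γ (.const c) σ
| cx {Γ : List BTy} : BPlus ξ Γ .cx (.arr .top (.arr .top .top))
| cty {Γ : List BTy} {σ : BTy} :
    BPlus ξ Γ (.cty σ) (.arr .top (.arr (.arr σ .top) .top))
| abs {Γ : List BTy} {M : Lam} {σ τ : BTy} :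
    BPlus ξ (σ :: Γ) M τ → BPlus ξ Γ (.lam M) (.arr σ τ)
| app {Γ : List BTy} {M N : Lam} {σ τ : BTy} :
    BPlus ξ Γ M (.arr σ τ) → BPlus ξ Γ N σ → BPlus ξ Γ (.app M N) τ
| interI {Γ : List BTy} {M : Lam} {σ τ : BTy} :
    BPlus ξ Γ M σ → BPlus ξ Γ M τ → BPlus ξ Γ M (.inter σ τ)
| interEl {Γ : List BTy} {M : Lam} {σ τ : BTy} :
    BPlus ξ Γ M (.inter σ τ) → BPlus ξ Γ M σ
| interEr {Γ : List BTy} {M : Lam} {σ τ : BTy} :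
    BPlus ξ Γ M (.inter σ τ) → BPlus ξ Γ M τ
| unionIl {Γ : List BTy} {M : Lam} {σ τ : BTy} :
    BPlus ξ Γ M σ → BPlus ξ Γ M (.union σ τ)
| unionIr {Γ : List BTy} {M : Lam} {σ τ : BTy} :
    BPlus ξ Γ M τ → BPlus ξ Γ M (.union σ τ)
| unionE {Γ : List BTy} {M N : Lam} {σ τ ρ : BTy} :
    BPlus ξ (σ :: Γ) M ρ → BPlus ξ (τ :: Γ) M ρ → BPlus ξ Γ N (.union σ τ) →
    BPlus ξ Γ (Lam.subst 0 N M) ρ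
| sub {Γ : List BTy} {M : Lam} {σ τ : BTy} :
    BPlus ξ Γ M σ → SubB σ τ → BPlus ξ Γ M τ

/-- The pseudo-terms of LF_Δ: kinds, families and objects in a single syntax
    (the typing judgments single out each syntactic class). -/
inductive Tm : Type
| type                        -- the kind Type
| pi (σ τ : Tm)               -- Πx:σ.K and Πx:σ.τ
| rarr (σ τ : Tm)             -- relevant family σ →ʳ τ
| inter (σ τ : Tm)            -- intersection family
| union (σ τ : Tm)            -- union family
| const (c : ℕ)               -- constants (family- and object-level)
| var (n : ℕ)                 -- variables (de Bruijn)
| lam (σ Δ : Tm)              -- λx:σ.Δ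
| app (Δ₁ Δ₂ : Tm)            -- application (of families and of objects)
| rlam (σ Δ : Tm)             -- relevant abstraction λʳx:σ.Δ
| rapp (Δ₁ Δ₂ : Tm)           -- relevant application
| pair (Δ₁ Δ₂ : Tm)           -- strong pair ⟨Δ₁,Δ₂⟩
| copair (Δ₁ Δ₂ : Tm)         -- strong co-pair [Δ₁,Δ₂]
| prl (Δ : Tm)                -- left projection
| prr (Δ : Tm)                -- right projection
| inl (σ Δ : Tm)              -- injection in_l^σ Δ
| inr (σ Δ : Tm)              -- injection in_r^σ Δ
deriving DecidableEq

namespace Tm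

/-- Lift free variables ≥ c by one. -/
def lift (c : ℕ) : Tm → Tm
| .type => .type
| .pi σ τ => .pi (lift c σ) (lift (c+1) τ)
| .rarr σ τ => .rarr (lift c σ) (lift c τ)
| .inter σ τ => .inter (lift c σ) (lift c τ)
| .union σ τ => .union (lift c σ) (lift c τ)
| .const k => .const k
| .var n => if n < c then .var n else .var (n+1)
| .lam σ Δ => .lam (lift c σ) (lift (c+1) Δ)
| .app Δ₁ Δ₂ => .app (lift c Δ₁) (lift c Δ₂)
| .rlam σ Δ => .rlam (lift c σ) (lift (c+1) Δ)
| .rapp Δ₁ Δ₂ => .rapp (lift c Δ₁) (lift c Δ₂)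
| .pair Δ₁ Δ₂ => .pair (lift c Δ₁) (lift c Δ₂)
| .copair Δ₁ Δ₂ => .copair (lift c Δ₁) (lift c Δ₂)
| .prl Δ => .prl (lift c Δ)
| .prr Δ => .prr (lift c Δ)
| .inl σ Δ => .inl (lift c σ) (lift c Δ)
| .inr σ Δ => .inr (lift c σ) (lift c Δ)

/-- Substitute the object N for variable k. -/
def subst (k : ℕ) (N : Tm) : Tm → Tm
| .type => .type
| .pi σ τ => .pi (subst k N σ) (subst (k+1) N τ)
| .rarr σ τ => .rarr (subst k N σ) (subst k N τ)
| .inter σ τ => .inter (subst k N σ) (subst k N τ)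
| .union σ τ => .union (subst k N σ) (subst k N τ)
| .const c => .const c
| .var n => if n < k then .var n else if n = k then (lift 0)^[k] N else .var (n-1)
| .lam σ Δ => .lam (subst k N σ) (subst (k+1) N Δ)
| .app Δ₁ Δ₂ => .app (subst k N Δ₁) (subst k N Δ₂)
| .rlam σ Δ => .rlam (subst k N σ) (subst (k+1) N Δ)
| .rapp Δ₁ Δ₂ => .rapp (subst k N Δ₁) (subst k N Δ₂)
| .pair Δ₁ Δ₂ => .pair (subst k N Δ₁) (subst k N Δ₂)
| .copair Δ₁ Δ₂ => .copair (subst k N Δ₁) (subst k N Δ₂)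
| .prl Δ => .prl (subst k N Δ)
| .prr Δ => .prr (subst k N Δ)
| .inl σ Δ => .inl (subst k N σ) (subst k N Δ)
| .inr σ Δ => .inr (subst k N σ) (subst k N Δ)

end Tm

/-- The essence function: compositionally erases all type annotations and
    proof-functional constructs (on non-objects it returns a dummy value). -/
def essence : Tm → Lam
| .var n => .var n
| .const c => .const c
| .lam _ Δ => .lam (essence Δ)
| .rlam _ Δ => .lam (essence Δ)
| .app Δ₁ Δ₂ => .app (essence Δ₁) (essence Δ₂)
| .rapp _ Δ₂ => essence Δ₂
| .pair Δ₁ _ => essence Δ₁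
| .copair Δ₁ _ => essence Δ₁
| .prl Δ => essence Δ
| .prr Δ => essence Δ
| .inl _ Δ => essence Δ
| .inr _ Δ => essence Δ
| .type => .const 0
| .pi _ _ => .const 0
| .rarr _ _ => .const 0
| .inter _ _ => .const 0
| .union _ _ => .const 0

/-- One-step reduction →_Δ of LF_Δ. Congruence rules are standard, except
    that the components of strong pairs and co-pairs must reduce in parallel,
    keeping identical essences. -/
inductive Step : Tm → Tm → Prop
| beta {σ Δ₁ Δ₂ : Tm} : Step (.app (.lam σ Δ₁) Δ₂) (Tm.subst 0 Δ₂ Δ₁)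
| rbeta {σ Δ₁ Δ₂ : Tm} : Step (.rapp (.rlam σ Δ₁) Δ₂) (Tm.subst 0 Δ₂ Δ₁)
| prl {Δ₁ Δ₂ : Tm} : Step (.prl (.pair Δ₁ Δ₂)) Δ₁
| prr {Δ₁ Δ₂ : Tm} : Step (.prr (.pair Δ₁ Δ₂)) Δ₂
| coInl {Δ₁ Δ₂ σ Δ₃ : Tm} :
    Step (.app (.copair Δ₁ Δ₂) (.inl σ Δ₃)) (.app Δ₁ Δ₃)
| coInr {Δ₁ Δ₂ σ Δ₃ : Tm} :
    Step (.app (.copair Δ₁ Δ₂) (.inr σ Δ₃)) (.app Δ₂ Δ₃)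
| piL {σ σ' τ : Tm} : Step σ σ' → Step (.pi σ τ) (.pi σ' τ)
| piR {σ τ τ' : Tm} : Step τ τ' → Step (.pi σ τ) (.pi σ τ')
| rarrL {σ σ' τ : Tm} : Step σ σ' → Step (.rarr σ τ) (.rarr σ' τ)
| rarrR {σ τ τ' : Tm} : Step τ τ' → Step (.rarr σ τ) (.rarr σ τ')
| interL {σ σ' τ : Tm} : Step σ σ' → Step (.inter σ τ) (.inter σ' τ)
| interR {σ τ τ' : Tm} : Step τ τ' → Step (.inter σ τ) (.inter σ τ')
| unionL {σ σ' τ : Tm} : Step σ σ' → Step (.union σ τ) (.union σ' τ)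
| unionR {σ τ τ' : Tm} : Step τ τ' → Step (.union σ τ) (.union σ τ')
| lamL {σ σ' Δ : Tm} : Step σ σ' → Step (.lam σ Δ) (.lam σ' Δ)
| lamR {σ Δ Δ' : Tm} : Step Δ Δ' → Step (.lam σ Δ) (.lam σ Δ')
| rlamL {σ σ' Δ : Tm} : Step σ σ' → Step (.rlam σ Δ) (.rlam σ' Δ)
| rlamR {σ Δ Δ' : Tm} : Step Δ Δ' → Step (.rlam σ Δ) (.rlam σ Δ')
| appL {Δ₁ Δ₁' Δ₂ : Tm} : Step Δ₁ Δ₁' → Step (.app Δ₁ Δ₂) (.app Δ₁' Δ₂)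
| appR {Δ₁ Δ₂ Δ₂' : Tm} : Step Δ₂ Δ₂' → Step (.app Δ₁ Δ₂) (.app Δ₁ Δ₂')
| rappL {Δ₁ Δ₁' Δ₂ : Tm} : Step Δ₁ Δ₁' → Step (.rapp Δ₁ Δ₂) (.rapp Δ₁' Δ₂)
| rappR {Δ₁ Δ₂ Δ₂' : Tm} : Step Δ₂ Δ₂' → Step (.rapp Δ₁ Δ₂) (.rapp Δ₁ Δ₂')
| prlC {Δ Δ' : Tm} : Step Δ Δ' → Step (.prl Δ) (.prl Δ')
| prrC {Δ Δ' : Tm} : Step Δ Δ' → Step (.prr Δ) (.prr Δ')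
| inlL {σ σ' Δ : Tm} : Step σ σ' → Step (.inl σ Δ) (.inl σ' Δ)
| inlR {σ Δ Δ' : Tm} : Step Δ Δ' → Step (.inl σ Δ) (.inl σ Δ')
| inrL {σ σ' Δ : Tm} : Step σ σ' → Step (.inr σ Δ) (.inr σ' Δ)
| inrR {σ Δ Δ' : Tm} : Step Δ Δ' → Step (.inr σ Δ) (.inr σ Δ')
| pairC {Δ₁ Δ₁' Δ₂ Δ₂' : Tm} :
    Step Δ₁ Δ₁' → Step Δ₂ Δ₂' → essence Δ₁' = essence Δ₂' →
    Step (.pair Δ₁ Δ₂) (.pair Δ₁' Δ₂')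
| copairC {Δ₁ Δ₁' Δ₂ Δ₂' : Tm} :
    Step Δ₁ Δ₁' → Step Δ₂ Δ₂' → essence Δ₁' = essence Δ₂' →
    Step (.copair Δ₁ Δ₂) (.copair Δ₁' Δ₂')

/-- Definitional equality =_Δ : the symmetric reflexive transitive closure
    of →_Δ. -/
def DefEq : Tm → Tm → Prop := Conv Step

/-- Strong normalization w.r.t. →_Δ. -/
def SNTm (t : Tm) : Prop := Acc (fun a b => Step b a) t

/-- Signature entries: kind declarations a:K and type declarations c:σ. -/
inductive SigEntry : Type
| kd (a : ℕ) (K : Tm)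
| ty (c : ℕ) (σ : Tm)
deriving DecidableEq

abbrev Sig := List SigEntry
abbrev Ctx := List Tm

/-- c is declared in the signature. -/
def inDom (S : Sig) (c : ℕ) : Prop :=
  (∃ K, SigEntry.kd c K ∈ S) ∨ (∃ σ, SigEntry.ty c σ ∈ S)

/-- Context lookup, with the appropriate lifting. -/
inductive VarTy : Ctx → ℕ → Tm → Prop
| zero {Γ : Ctx} {σ : Tm} : VarTy (σ :: Γ) 0 (Tm.lift 0 σ)
| succ {Γ : Ctx} {n : ℕ} {σ τ : Tm} :
    VarTy Γ n σ → VarTy (τ :: Γ) (n+1) (Tm.lift 0 σ)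

mutual
/-- Σ is a valid signature. -/
inductive SigOk : Sig → Prop
| nil : SigOk []
| kd {S : Sig} {a : ℕ} {K : Tm} :
    SigOk S → KindOk S [] K → ¬ inDom S a → SigOk (.kd a K :: S)
| ty {S : Sig} {c : ℕ} {σ : Tm} :
    SigOk S → FamTy S [] σ .type → ¬ inDom S c → SigOk (.ty c σ :: S)

/-- Γ is a valid context in Σ. -/
inductive CtxOk : Sig → Ctx → Prop
| nil {S : Sig} : SigOk S → CtxOk S []
| cons {S : Sig} {Γ : Ctx} {σ : Tm} :
    CtxOk S Γ → FamTy S Γ σ .type → CtxOk S (σ :: Γ)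

/-- K is a kind in Γ and Σ. -/
inductive KindOk : Sig → Ctx → Tm → Prop
| type {S : Sig} {Γ : Ctx} : CtxOk S Γ → KindOk S Γ .type
| pi {S : Sig} {Γ : Ctx} {σ K : Tm} :
    FamTy S Γ σ .type → KindOk S (σ :: Γ) K → KindOk S Γ (.pi σ K)

/-- σ has kind K in Γ and Σ. -/
inductive FamTy : Sig → Ctx → Tm → Tm → Prop
| const {S : Sig} {Γ : Ctx} {a : ℕ} {K : Tm} :
    CtxOk S Γ → SigEntry.kd a K ∈ S → FamTy S Γ (.const a) K
| pi {S : Sig} {Γ : Ctx} {σ τ : Tm} :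
    FamTy S Γ σ .type → FamTy S (σ :: Γ) τ .type → FamTy S Γ (.pi σ τ) .type
| app {S : Sig} {Γ : Ctx} {σ τ K Δ : Tm} :
    FamTy S Γ σ (.pi τ K) → ObjTy S Γ Δ τ →
    FamTy S Γ (.app σ Δ) (Tm.subst 0 Δ K)
| rarr {S : Sig} {Γ : Ctx} {σ τ : Tm} :
    FamTy S Γ σ .type → FamTy S Γ τ .type → FamTy S Γ (.rarr σ τ) .type
| inter {S : Sig} {Γ : Ctx} {σ τ : Tm} :
    FamTy S Γ σ .type → FamTy S Γ τ .type → FamTy S Γ (.inter σ τ) .type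
| union {S : Sig} {Γ : Ctx} {σ τ : Tm} :
    FamTy S Γ σ .type → FamTy S Γ τ .type → FamTy S Γ (.union σ τ) .type
| conv {S : Sig} {Γ : Ctx} {σ K₁ K₂ : Tm} :
    FamTy S Γ σ K₁ → KindOk S Γ K₂ → DefEq K₁ K₂ → FamTy S Γ σ K₂

/-- Δ has type σ in Γ and Σ. -/
inductive ObjTy : Sig → Ctx → Tm → Tm → Prop
| const {S : Sig} {Γ : Ctx} {c : ℕ} {σ : Tm} :
    CtxOk S Γ → SigEntry.ty c σ ∈ S → ObjTy S Γ (.const c) σ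
| var {S : Sig} {Γ : Ctx} {n : ℕ} {σ : Tm} :
    CtxOk S Γ → VarTy Γ n σ → ObjTy S Γ (.var n) σ
| lam {S : Sig} {Γ : Ctx} {σ τ Δ : Tm} :
    ObjTy S (σ :: Γ) Δ τ → ObjTy S Γ (.lam σ Δ) (.pi σ τ)
| app {S : Sig} {Γ : Ctx} {σ τ Δ₁ Δ₂ : Tm} :
    ObjTy S Γ Δ₁ (.pi σ τ) → ObjTy S Γ Δ₂ σ →
    ObjTy S Γ (.app Δ₁ Δ₂) (Tm.subst 0 Δ₂ τ)
| rlam {S : Sig} {Γ : Ctx} {σ τ Δ : Tm} :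
    ObjTy S (σ :: Γ) Δ (Tm.lift 0 τ) →
    Lam.BetaEtaEq (essence Δ) (.var 0) →
    ObjTy S Γ (.rlam σ Δ) (.rarr σ τ)
| rapp {S : Sig} {Γ : Ctx} {σ τ Δ₁ Δ₂ : Tm} :
    ObjTy S Γ Δ₁ (.rarr σ τ) → ObjTy S Γ Δ₂ σ → ObjTy S Γ (.rapp Δ₁ Δ₂) τ
| pair {S : Sig} {Γ : Ctx} {σ τ Δ₁ Δ₂ : Tm} :
    ObjTy S Γ Δ₁ σ → ObjTy S Γ Δ₂ τ →
    Lam.BetaEtaEq (essence Δ₁) (essence Δ₂) →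
    ObjTy S Γ (.pair Δ₁ Δ₂) (.inter σ τ)
| prl {S : Sig} {Γ : Ctx} {σ τ Δ : Tm} :
    ObjTy S Γ Δ (.inter σ τ) → ObjTy S Γ (.prl Δ) σ
| prr {S : Sig} {Γ : Ctx} {σ τ Δ : Tm} :
    ObjTy S Γ Δ (.inter σ τ) → ObjTy S Γ (.prr Δ) τ
| inl {S : Sig} {Γ : Ctx} {σ τ Δ : Tm} :
    ObjTy S Γ Δ σ → FamTy S Γ (.union σ τ) .type →
    ObjTy S Γ (.inl τ Δ) (.union σ τ)
| inr {S : Sig} {Γ : Ctx} {σ τ Δ : Tm} :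
    ObjTy S Γ Δ τ → FamTy S Γ (.union σ τ) .type →
    ObjTy S Γ (.inr σ Δ) (.union σ τ)
| copair {S : Sig} {Γ : Ctx} {σ τ ρ Δ₁ Δ₂ : Tm} :
    ObjTy S Γ Δ₁
      (.pi σ (Tm.subst 0 (.inl (Tm.lift 0 τ) (.var 0)) (Tm.lift 1 ρ))) →
    ObjTy S Γ Δ₂
      (.pi τ (Tm.subst 0 (.inr (Tm.lift 0 σ) (.var 0)) (Tm.lift 1 ρ))) →
    FamTy S (.union σ τ :: Γ) ρ .type →
    Lam.BetaEtaEq (essence Δ₁) (essence Δ₂) →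
    ObjTy S Γ (.copair Δ₁ Δ₂) (.pi (.union σ τ) ρ)
| conv {S : Sig} {Γ : Ctx} {σ τ Δ : Tm} :
    ObjTy S Γ Δ σ → FamTy S Γ τ .type → DefEq σ τ → ObjTy S Γ Δ τ
end

/-- The dependency-erasing translation |·| on families and kinds. -/
def eraseTy : Tm → BTy
| .type => .top
| .pi σ τ => .arr (eraseTy σ) (eraseTy τ)
| .rarr σ τ => .arr (eraseTy σ) (eraseTy τ)
| .inter σ τ => .inter (eraseTy σ) (eraseTy τ)
| .union σ τ => .union (eraseTy σ) (eraseTy τ)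
| .const a => .atom a
| .app σ _ => eraseTy σ
| _ => .top

/-- The forgetful translation ‖·‖ of LF_Δ objects and families into pure
    λ-terms with constants, flattening type annotations into redexes. -/
def tr : Tm → Lam
| .type => .const 0
| .pi σ τ => .app (.app (.cty (eraseTy σ)) (tr σ)) (.lam (tr τ))
| .rarr σ τ => .app (.app .cx (tr σ)) (tr τ)
| .inter σ τ => .app (.app .cx (tr σ)) (tr τ)
| .union σ τ => .app (.app .cx (tr σ)) (tr τ)
| .const c => .const c
| .var n => .var n
| .lam σ Δ => .app (.lam (.lam (Lam.lift 1 (tr Δ)))) (tr σ)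
| .rlam σ Δ => .app (.lam (.lam (Lam.lift 1 (tr Δ)))) (tr σ)
| .app Δ₁ Δ₂ => .app (tr Δ₁) (tr Δ₂)
| .rapp Δ₁ Δ₂ => .app (tr Δ₁) (tr Δ₂)
| .pair Δ₁ _ => tr Δ₁
| .copair Δ₁ _ => tr Δ₁
| .prl Δ => tr Δ
| .prr Δ => tr Δ
| .inl σ Δ => .app (.lam (Lam.lift 0 (tr Δ))) (tr σ)
| .inr σ Δ => .app (.lam (Lam.lift 0 (tr Δ))) (tr σ)

/-- Constant typing axioms of B⁺ induced by a signature. -/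
def sigXi (S : Sig) : ℕ → BTy → Prop :=
  fun c τ => (∃ σ, SigEntry.ty c σ ∈ S ∧ τ = eraseTy σ) ∨
             (∃ K, SigEntry.kd c K ∈ S ∧ τ = eraseTy K)

/-- Embedding of (non-dependent, relevance-free) B types as LF_Δ families. -/
def toFam : BTy → Tm
| .atom a => .const a
| .top => .const 0
| .arr σ τ => .pi (toFam σ) (Tm.lift 0 (toFam τ))
| .inter σ τ => .inter (toFam σ) (toFam τ)
| .union σ τ => .union (toFam σ) (toFam τ)

/-!
A typable LF_Δ term is sent by a forgetful translation into a calculus known to be strongly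
normalizing, in such a way that every `→_Δ` step becomes at least one step there; an infinite
reduction from the term would then lift to one from its image. As target we take the simply typed
λ-calculus with products and sums, normalizing by Tait–Girard reducibility: dependency is
forgotten, intersections become products, unions sums, and strong (co)pairs keep both components.
That the image is typable is proved by induction on derivations. The conversion rules need
convertible families to have equal erasures; this follows from confluence of `→_Δ`, obtained from
Takahashi's complete development for parallel reduction.
-/

open Relation

def scons {α : Type} (a : α) (f : ℕ → α) : ℕ → α
  | 0 => a
  | n + 1 => f n

@[simp] theorem scons_zero {α : Type} (a : α) (f : ℕ → α) : scons a f 0 = a := rfl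

@[simp] theorem scons_succ {α : Type} (a : α) (f : ℕ → α) (n : ℕ) : scons a f (n + 1) = f n :=
  rfl

@[simp] theorem scons_comp_succ {α : Type} (a : α) (f : ℕ → α) : scons a f ∘ Nat.succ = f := rfl

def upRen (ξ : ℕ → ℕ) : ℕ → ℕ := scons 0 (fun n => ξ n + 1)

@[simp] theorem upRen_zero (ξ : ℕ → ℕ) : upRen ξ 0 = 0 := rfl

@[simp] theorem upRen_succ (ξ : ℕ → ℕ) (n : ℕ) : upRen ξ (n + 1) = ξ n + 1 := rfl

@[simp] theorem upRen_comp (ξ ζ : ℕ → ℕ) : upRen ξ ∘ upRen ζ = upRen (ξ ∘ ζ) :=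
  funext fun n => by cases n <;> rfl

@[simp] theorem upRen_comp_succ (ξ : ℕ → ℕ) : upRen ξ ∘ Nat.succ = Nat.succ ∘ ξ := rfl

theorem acc_of_map {α β : Type} {r : α → α → Prop} {s : β → β → Prop} (f : α → β)
    (hf : ∀ {a b}, r a b → s (f a) (f b)) {a : α} (h : Acc s (f a)) : Acc r a :=
  Subrelation.accessible hf (InvImage.accessible f h)

/-! ## Simply typed λ-calculus with products and sums -/

inductive STy : Type
  | top
  | arr (A B : STy)
  | prod (A B : STy)
  | sum (A B : STy)

inductive STm : Type
  | var (n : ℕ)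
  | cst (k : ℕ)
  | lam (M : STm)
  | app (M N : STm)
  | pair (M N : STm)
  | fst (M : STm)
  | snd (M : STm)
  | inl (M : STm)
  | inr (M : STm)

namespace STm

def ren (ξ : ℕ → ℕ) : STm → STm
  | var n => var (ξ n)
  | cst k => cst k
  | lam M => lam (ren (upRen ξ) M)
  | app M N => app (ren ξ M) (ren ξ N)
  | pair M N => pair (ren ξ M) (ren ξ N)
  | fst M => fst (ren ξ M)
  | snd M => snd (ren ξ M)
  | inl M => inl (ren ξ M)
  | inr M => inr (ren ξ M)

def up (ρ : ℕ → STm) : ℕ → STm := scons (var 0) (fun n => ren Nat.succ (ρ n))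

def sub (ρ : ℕ → STm) : STm → STm
  | var n => ρ n
  | cst k => cst k
  | lam M => lam (sub (up ρ) M)
  | app M N => app (sub ρ M) (sub ρ N)
  | pair M N => pair (sub ρ M) (sub ρ N)
  | fst M => fst (sub ρ M)
  | snd M => snd (sub ρ M)
  | inl M => inl (sub ρ M)
  | inr M => inr (sub ρ M)

theorem ren_ren (ξ ζ : ℕ → ℕ) (M : STm) : ren ξ (ren ζ M) = ren (ξ ∘ ζ) M := by
  induction M generalizing ξ ζ <;> simp_all [ren]

theorem sub_ren (ρ : ℕ → STm) (ξ : ℕ → ℕ) (M : STm) : sub ρ (ren ξ M) = sub (ρ ∘ ξ) M := by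
  have up_comp : ∀ ρ : ℕ → STm, ∀ ξ, up ρ ∘ upRen ξ = up (ρ ∘ ξ) := fun ρ ξ =>
    funext fun n => by cases n <;> rfl
  induction M generalizing ρ ξ <;> simp_all [ren, sub]

theorem ren_sub (ξ : ℕ → ℕ) (ρ : ℕ → STm) (M : STm) : ren ξ (sub ρ M) = sub (ren ξ ∘ ρ) M := by
  have up_comp : ∀ ρ : ℕ → STm, ∀ ξ, ren (upRen ξ) ∘ up ρ = up (ren ξ ∘ ρ) := fun ρ ξ =>
    funext fun n => by cases n <;> simp [up, ren, ren_ren]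
  induction M generalizing ρ ξ <;> simp_all [ren, sub]

theorem sub_sub (ρ ρ' : ℕ → STm) (M : STm) : sub ρ (sub ρ' M) = sub (sub ρ ∘ ρ') M := by
  have up_comp : ∀ ρ ρ' : ℕ → STm, sub (up ρ) ∘ up ρ' = up (sub ρ ∘ ρ') := fun ρ ρ' =>
    funext fun n => by cases n <;> simp [up, sub, sub_ren, ren_sub, Function.comp_def]
  induction M generalizing ρ ρ' <;> simp_all [sub]

theorem sub_var_eq_self (M : STm) : sub var M = M := by
  have up_var : up var = var := funext fun n => by cases n <;> rfl
  induction M <;> simp_all [sub]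

theorem ren_eq_sub (ξ : ℕ → ℕ) (M : STm) : ren ξ M = sub (var ∘ ξ) M := by
  have up_comp : ∀ ξ, up (var ∘ ξ) = var ∘ upRen ξ := fun ξ => funext fun n => by cases n <;> rfl
  induction M generalizing ξ <;> simp_all [ren, sub]

theorem sub_sub_scons (ρ : ℕ → STm) (N M : STm) :
    sub ρ (sub (scons N var) M) = sub (scons (sub ρ N) var) (sub (up ρ) M) := by
  rw [sub_sub, sub_sub]
  congr 1
  funext n
  cases n <;> simp [up, sub, sub_ren, sub_var_eq_self]

/-- A pair applied to an injection performs case analysis: pairs also serve as the copairs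
`[Δ₁, Δ₂]` of LF_Δ. -/
inductive Step : STm → STm → Prop
  | beta {M N : STm} : Step (app (lam M) N) (sub (scons N var) M)
  | fst_pair {M N : STm} : Step (fst (pair M N)) M
  | snd_pair {M N : STm} : Step (snd (pair M N)) N
  | case_inl {M N P : STm} : Step (app (pair M N) (inl P)) (app M P)
  | case_inr {M N P : STm} : Step (app (pair M N) (inr P)) (app N P)
  | lam {M M' : STm} : Step M M' → Step (lam M) (lam M')
  | appL {M M' N : STm} : Step M M' → Step (app M N) (app M' N)
  | appR {M N N' : STm} : Step N N' → Step (app M N) (app M N')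
  | pairL {M M' N : STm} : Step M M' → Step (pair M N) (pair M' N)
  | pairR {M N N' : STm} : Step N N' → Step (pair M N) (pair M N')
  | fst {M M' : STm} : Step M M' → Step (fst M) (fst M')
  | snd {M M' : STm} : Step M M' → Step (snd M) (snd M')
  | inl {M M' : STm} : Step M M' → Step (inl M) (inl M')
  | inr {M M' : STm} : Step M M' → Step (inr M) (inr M')

def SN (M : STm) : Prop := Acc (fun a b => Step b a) M

theorem Step.sub {M M' : STm} (h : Step M M') (ρ : ℕ → STm) : Step (M.sub ρ) (M'.sub ρ) := by
  induction h generalizing ρ with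
  | beta => rw [sub_sub_scons]; exact .beta
  | fst_pair => exact .fst_pair
  | snd_pair => exact .snd_pair
  | case_inl => exact .case_inl
  | case_inr => exact .case_inr
  | lam _ ih => exact .lam (ih _)
  | appL _ ih => exact .appL (ih _)
  | appR _ ih => exact .appR (ih _)
  | pairL _ ih => exact .pairL (ih _)
  | pairR _ ih => exact .pairR (ih _)
  | fst _ ih => exact .fst (ih _)
  | snd _ ih => exact .snd (ih _)
  | inl _ ih => exact .inl (ih _)
  | inr _ ih => exact .inr (ih _)

theorem Step.ren {M M' : STm} (h : Step M M') (ξ : ℕ → ℕ) : Step (M.ren ξ) (M'.ren ξ) := by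
  rw [ren_eq_sub, ren_eq_sub]
  exact h.sub _

theorem SN.of_sub {M : STm} {ρ : ℕ → STm} (h : SN (M.sub ρ)) : SN M :=
  acc_of_map (sub ρ) (fun hs => hs.sub ρ) h

theorem SN.step {M M' : STm} (h : SN M) (hs : Step M M') : SN M' := h.inv hs

theorem SN.lam {M : STm} (h : SN M) : SN (lam M) :=
  h.of_fibration STm.lam fun _ _ hs => by cases hs with | lam hs => exact ⟨_, hs, rfl⟩

theorem SN.inl {M : STm} (h : SN M) : SN (inl M) :=
  h.of_fibration STm.inl fun _ _ hs => by cases hs with | inl hs => exact ⟨_, hs, rfl⟩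

theorem SN.inr {M : STm} (h : SN M) : SN (inr M) :=
  h.of_fibration STm.inr fun _ _ hs => by cases hs with | inr hs => exact ⟨_, hs, rfl⟩

theorem SN.pair {M N : STm} (hM : SN M) (hN : SN N) : SN (pair M N) := by
  refine (hM.prod_gameAdd hN).of_fibration (fun p : STm × STm => STm.pair p.1 p.2) fun _ _ hs => ?_
  cases hs with
  | pairL hs => exact ⟨_, .fst hs, rfl⟩
  | pairR hs => exact ⟨_, .snd hs, rfl⟩

inductive HasType : List STy → STm → STy → Prop
  | var {Γ : List STy} {n : ℕ} {A : STy} : Γ[n]? = some A → HasType Γ (var n) A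
  | cst {Γ : List STy} {k : ℕ} {A : STy} : HasType Γ (cst k) A
  | lam {Γ : List STy} {M : STm} {A B : STy} :
      HasType (A :: Γ) M B → HasType Γ (lam M) (.arr A B)
  | app {Γ : List STy} {M N : STm} {A B : STy} :
      HasType Γ M (.arr A B) → HasType Γ N A → HasType Γ (app M N) B
  | pair {Γ : List STy} {M N : STm} {A B : STy} :
      HasType Γ M A → HasType Γ N B → HasType Γ (pair M N) (.prod A B)
  | case {Γ : List STy} {M N : STm} {A B C : STy} :
      HasType Γ M (.arr A C) → HasType Γ N (.arr B C) → HasType Γ (pair M N) (.arr (.sum A B) C)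
  | fst {Γ : List STy} {M : STm} {A B : STy} : HasType Γ M (.prod A B) → HasType Γ (fst M) A
  | snd {Γ : List STy} {M : STm} {A B : STy} : HasType Γ M (.prod A B) → HasType Γ (snd M) B
  | inl {Γ : List STy} {M : STm} {A B : STy} : HasType Γ M A → HasType Γ (inl M) (.sum A B)
  | inr {Γ : List STy} {M : STm} {A B : STy} : HasType Γ M B → HasType Γ (inr M) (.sum A B)

theorem HasType.ren {Γ : List STy} {M : STm} {A : STy} (h : HasType Γ M A) {Γ' : List STy}
    {ξ : ℕ → ℕ} (hξ : ∀ n B, Γ[n]? = some B → Γ'[ξ n]? = some B) : HasType Γ' (M.ren ξ) A := by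
  induction h generalizing Γ' ξ with
  | var h => exact .var (hξ _ _ h)
  | cst => exact .cst
  | lam _ ih => exact .lam (ih fun n B h => by cases n <;> simp_all)
  | app _ _ ih₁ ih₂ => exact .app (ih₁ hξ) (ih₂ hξ)
  | pair _ _ ih₁ ih₂ => exact .pair (ih₁ hξ) (ih₂ hξ)
  | case _ _ ih₁ ih₂ => exact .case (ih₁ hξ) (ih₂ hξ)
  | fst _ ih => exact .fst (ih hξ)
  | snd _ ih => exact .snd (ih hξ)
  | inl _ ih => exact .inl (ih hξ)
  | inr _ ih => exact .inr (ih hξ)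

theorem HasType.weaken {Γ : List STy} {M : STm} {A : STy} (h : HasType Γ M A) (B : STy) :
    HasType (B :: Γ) (M.ren Nat.succ) A :=
  h.ren fun _ _ h => h

/-! ## Strong normalization by reducibility -/

def Neutral : STm → Prop
  | lam _ | pair _ _ | inl _ | inr _ => False
  | _ => True

def Reducible : STy → STm → Prop
  | .top, M => SN M
  | .arr A B, M => SN M ∧ ∀ N, Reducible A N → Reducible B (app M N)
  | .prod A B, M => SN M ∧ Reducible A (fst M) ∧ Reducible B (snd M)
  | .sum A B, M => SN M ∧ (∀ N, ReflTransGen Step M (inl N) → Reducible A N) ∧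
      (∀ N, ReflTransGen Step M (inr N) → Reducible B N)

theorem Reducible.sn : ∀ {A : STy} {M : STm}, Reducible A M → SN M
  | .top, _, h => h
  | .arr _ _, _, h => h.1
  | .prod _ _, _, h => h.1
  | .sum _ _, _, h => h.1

theorem Reducible.step : ∀ {A : STy} {M M' : STm}, Reducible A M → Step M M' → Reducible A M'
  | .top, _, _, h, hs => SN.step h hs
  | .arr _ _, _, _, ⟨hsn, h⟩, hs => ⟨hsn.step hs, fun N hN => (h N hN).step (.appL hs)⟩
  | .prod _ _, _, _, ⟨hsn, h₁, h₂⟩, hs => ⟨hsn.step hs, h₁.step (.fst hs), h₂.step (.snd hs)⟩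
  | .sum _ _, _, _, ⟨hsn, h₁, h₂⟩, hs =>
      ⟨hsn.step hs, fun N hN => h₁ N (.head hs hN), fun N hN => h₂ N (.head hs hN)⟩

theorem Reducible.steps {A : STy} {M M' : STm} (h : Reducible A M)
    (hs : ReflTransGen Step M M') : Reducible A M' := by
  induction hs with
  | refl => exact h
  | tail _ hs ih => exact ih.step hs

theorem Reducible.of_neutral : ∀ {A : STy} {M : STm}, Neutral M →
    (∀ M', Step M M' → Reducible A M') → Reducible A M
  | .top, _, _, h => Acc.intro _ fun M' hs => h M' hs
  | .arr _ B, M, hM, h => by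
      refine ⟨Acc.intro _ fun M' hs => (h M' hs).sn, fun N hN => ?_⟩
      induction hN.sn with
      | intro N _ ih =>
        refine Reducible.of_neutral (A := B) trivial fun P hP => ?_
        cases hP with
        | appL hs => exact (h _ hs).2 N hN
        | appR hs => exact ih _ hs (hN.step hs)
        | beta | case_inl | case_inr => exact hM.elim
  | .prod _ _, M, hM, h => by
      refine ⟨Acc.intro _ fun M' hs => (h M' hs).sn, .of_neutral trivial fun P hP => ?_,
        .of_neutral trivial fun P hP => ?_⟩
      · cases hP with
        | fst_pair => exact hM.elim
        | fst hs => exact (h _ hs).2.1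
      · cases hP with
        | snd_pair => exact hM.elim
        | snd hs => exact (h _ hs).2.2
  | .sum _ _, M, hM, h => by
      refine ⟨Acc.intro _ fun M' hs => (h M' hs).sn, fun N hN => ?_, fun N hN => ?_⟩
      · rcases hN.cases_head with rfl | ⟨_, hs, hN⟩
        exacts [hM.elim, (h _ hs).2.1 N hN]
      · rcases hN.cases_head with rfl | ⟨_, hs, hN⟩
        exacts [hM.elim, (h _ hs).2.2 N hN]

theorem reducible_var (A : STy) (n : ℕ) : Reducible A (var n) :=
  .of_neutral trivial fun _ h => nomatch h

theorem reducible_cst (A : STy) (k : ℕ) : Reducible A (cst k) :=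
  .of_neutral trivial fun _ h => nomatch h

theorem reducible_lam {A B : STy} {M : STm}
    (h : ∀ N, Reducible A N → Reducible B (M.sub (scons N var))) :
    Reducible (.arr A B) (lam M) := by
  have hM : SN M := SN.of_sub (h _ (reducible_var A 0)).sn
  refine ⟨hM.lam, fun N hN => ?_⟩
  induction hM generalizing N with
  | intro M _ ihM =>
    induction hN.sn with
    | intro N _ ihN =>
      refine .of_neutral trivial fun P hP => ?_
      cases hP with
      | beta => exact h N hN
      | appL hs =>
        cases hs with
        | lam hs => exact ihM _ hs (fun P hP => (h P hP).step (hs.sub _)) N hN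
      | appR hs => exact ihN _ hs (hN.step hs)

theorem reducible_pair {A B : STy} {M N : STm} (hM : Reducible A M) (hN : Reducible B N) :
    Reducible (.prod A B) (pair M N) := by
  refine ⟨hM.sn.pair hN.sn, ?_, ?_⟩
  · induction hM.sn generalizing N with
    | intro M _ ihM =>
      induction hN.sn with
      | intro N _ ihN =>
        refine .of_neutral trivial fun P hP => ?_
        cases hP with
        | fst_pair => exact hM
        | fst hs =>
          cases hs with
          | pairL hs => exact ihM _ hs (hM.step hs) hN
          | pairR hs => exact ihN _ hs (hN.step hs)
  · induction hM.sn generalizing N with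
    | intro M _ ihM =>
      induction hN.sn with
      | intro N _ ihN =>
        refine .of_neutral trivial fun P hP => ?_
        cases hP with
        | snd_pair => exact hN
        | snd hs =>
          cases hs with
          | pairL hs => exact ihM _ hs (hM.step hs) hN
          | pairR hs => exact ihN _ hs (hN.step hs)

theorem reducible_case {A B C : STy} {M N : STm} (hM : Reducible (.arr A C) M)
    (hN : Reducible (.arr B C) N) : Reducible (.arr (.sum A B) C) (pair M N) := by
  refine ⟨hM.sn.pair hN.sn, fun P hP => ?_⟩
  induction hM.sn generalizing N P with
  | intro M _ ihM =>
    induction hN.sn generalizing P with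
    | intro N _ ihN =>
      induction hP.sn with
      | intro P _ ihP =>
        refine .of_neutral trivial fun Q hQ => ?_
        cases hQ with
        | case_inl => exact hM.2 _ (hP.2.1 _ .refl)
        | case_inr => exact hN.2 _ (hP.2.2 _ .refl)
        | appL hs =>
          cases hs with
          | pairL hs => exact ihM _ hs (hM.step hs) hN P hP
          | pairR hs => exact ihN _ hs (hN.step hs) P hP
        | appR hs => exact ihP _ hs (hP.step hs)

theorem steps_inl {M Q : STm} (h : ReflTransGen Step (inl M) Q) :
    ∃ M', Q = inl M' ∧ ReflTransGen Step M M' := by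
  induction h with
  | refl => exact ⟨M, rfl, .refl⟩
  | tail _ hs ih =>
    obtain ⟨M', rfl, hM'⟩ := ih
    cases hs with
    | inl hs => exact ⟨_, rfl, hM'.tail hs⟩

theorem steps_inr {M Q : STm} (h : ReflTransGen Step (inr M) Q) :
    ∃ M', Q = inr M' ∧ ReflTransGen Step M M' := by
  induction h with
  | refl => exact ⟨M, rfl, .refl⟩
  | tail _ hs ih =>
    obtain ⟨M', rfl, hM'⟩ := ih
    cases hs with
    | inr hs => exact ⟨_, rfl, hM'.tail hs⟩

theorem reducible_inl {A B : STy} {M : STm} (h : Reducible A M) :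
    Reducible (.sum A B) (inl M) := by
  refine ⟨h.sn.inl, fun N hN => ?_, fun N hN => ?_⟩ <;> obtain ⟨M', hM', hs⟩ := steps_inl hN
  · cases hM'
    exact h.steps hs
  · cases hM'

theorem reducible_inr {A B : STy} {M : STm} (h : Reducible B M) :
    Reducible (.sum A B) (inr M) := by
  refine ⟨h.sn.inr, fun N hN => ?_, fun N hN => ?_⟩ <;> obtain ⟨M', hM', hs⟩ := steps_inr hN
  · cases hM'
  · cases hM'
    exact h.steps hs

theorem HasType.reducible_sub {Γ : List STy} {M : STm} {A : STy} (h : HasType Γ M A)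
    {ρ : ℕ → STm} (hρ : ∀ n B, Γ[n]? = some B → Reducible B (ρ n)) :
    Reducible A (M.sub ρ) := by
  induction h generalizing ρ with
  | var h => exact hρ _ _ h
  | cst => exact reducible_cst _ _
  | @lam _ M _ _ _ ih =>
    refine reducible_lam fun N hN => ?_
    rw [sub_sub]
    refine ih fun n B hB => ?_
    cases n with
    | zero => cases hB; simpa [up, sub] using hN
    | succ n => simpa [up, sub_ren, sub_var_eq_self] using hρ n B hB
  | app _ _ ih₁ ih₂ => exact (ih₁ hρ).2 _ (ih₂ hρ)
  | pair _ _ ih₁ ih₂ => exact reducible_pair (ih₁ hρ) (ih₂ hρ)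
  | case _ _ ih₁ ih₂ => exact reducible_case (ih₁ hρ) (ih₂ hρ)
  | fst _ ih => exact (ih hρ).2.1
  | snd _ ih => exact (ih hρ).2.2
  | inl _ ih => exact reducible_inl (ih hρ)
  | inr _ ih => exact reducible_inr (ih hρ)

theorem HasType.sn {Γ : List STy} {M : STm} {A : STy} (h : HasType Γ M A) : SN M := by
  simpa [sub_var_eq_self] using (h.reducible_sub fun n B _ => reducible_var B n).sn

/-- A vacuous redex that keeps the type annotation `N` around, so that reductions inside it are
still simulated. -/
def annot (M N : STm) : STm := app (lam (M.ren Nat.succ)) N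

theorem ren_annot (ξ : ℕ → ℕ) (M N : STm) : (annot M N).ren ξ = annot (M.ren ξ) (N.ren ξ) := by
  simp [annot, ren, ren_ren]

theorem sub_annot (ρ : ℕ → STm) (M N : STm) : (annot M N).sub ρ = annot (M.sub ρ) (N.sub ρ) := by
  simp only [annot, sub, sub_ren, ren_sub]
  rfl

theorem Step.annot_beta (M N : STm) : Step (annot M N) M := by
  have := Step.beta (M := M.ren Nat.succ) (N := N)
  rwa [sub_ren, scons_comp_succ, sub_var_eq_self] at this

theorem Step.annotL {M M' : STm} (N : STm) (h : Step M M') :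
    Step (STm.annot M N) (STm.annot M' N) :=
  .appL (.lam (h.ren _))

theorem Step.annotR (M : STm) {N N' : STm} (h : Step N N') :
    Step (STm.annot M N) (STm.annot M N') :=
  .appR h

theorem transGen_map {f : STm → STm} (hf : ∀ {M M'}, Step M M' → Step (f M) (f M'))
    {M M' : STm} (h : TransGen Step M M') : TransGen Step (f M) (f M') :=
  TransGen.lift f (fun _ _ => hf) _ _ h

theorem HasType.annot {Γ : List STy} {M N : STm} {A B : STy} (hM : HasType Γ M A)
    (hN : HasType Γ N B) : HasType Γ (STm.annot M N) A :=
  .app (.lam (hM.weaken B)) hN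

theorem HasType.pair_inv {Γ : List STy} {M N : STm} {A : STy} (h : HasType Γ (STm.pair M N) A) :
    (∃ B, HasType Γ M B) ∧ ∃ C, HasType Γ N C := by
  cases h with
  | pair hM hN | case hM hN => exact ⟨⟨_, hM⟩, _, hN⟩

end STm

/-! ## Renaming and substitution of pseudo-terms -/

namespace Tm

def ren (ξ : ℕ → ℕ) : Tm → Tm
  | type => type
  | pi σ τ => pi (ren ξ σ) (ren (upRen ξ) τ)
  | rarr σ τ => rarr (ren ξ σ) (ren ξ τ)
  | inter σ τ => inter (ren ξ σ) (ren ξ τ)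
  | union σ τ => union (ren ξ σ) (ren ξ τ)
  | const c => const c
  | var n => var (ξ n)
  | lam σ Δ => lam (ren ξ σ) (ren (upRen ξ) Δ)
  | app Δ₁ Δ₂ => app (ren ξ Δ₁) (ren ξ Δ₂)
  | rlam σ Δ => rlam (ren ξ σ) (ren (upRen ξ) Δ)
  | rapp Δ₁ Δ₂ => rapp (ren ξ Δ₁) (ren ξ Δ₂)
  | pair Δ₁ Δ₂ => pair (ren ξ Δ₁) (ren ξ Δ₂)
  | copair Δ₁ Δ₂ => copair (ren ξ Δ₁) (ren ξ Δ₂)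
  | prl Δ => prl (ren ξ Δ)
  | prr Δ => prr (ren ξ Δ)
  | inl σ Δ => inl (ren ξ σ) (ren ξ Δ)
  | inr σ Δ => inr (ren ξ σ) (ren ξ Δ)

def up (ρ : ℕ → Tm) : ℕ → Tm := scons (var 0) (fun n => ren Nat.succ (ρ n))

def sub (ρ : ℕ → Tm) : Tm → Tm
  | type => type
  | pi σ τ => pi (sub ρ σ) (sub (up ρ) τ)
  | rarr σ τ => rarr (sub ρ σ) (sub ρ τ)
  | inter σ τ => inter (sub ρ σ) (sub ρ τ)
  | union σ τ => union (sub ρ σ) (sub ρ τ)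
  | const c => const c
  | var n => ρ n
  | lam σ Δ => lam (sub ρ σ) (sub (up ρ) Δ)
  | app Δ₁ Δ₂ => app (sub ρ Δ₁) (sub ρ Δ₂)
  | rlam σ Δ => rlam (sub ρ σ) (sub (up ρ) Δ)
  | rapp Δ₁ Δ₂ => rapp (sub ρ Δ₁) (sub ρ Δ₂)
  | pair Δ₁ Δ₂ => pair (sub ρ Δ₁) (sub ρ Δ₂)
  | copair Δ₁ Δ₂ => copair (sub ρ Δ₁) (sub ρ Δ₂)
  | prl Δ => prl (sub ρ Δ)
  | prr Δ => prr (sub ρ Δ)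
  | inl σ Δ => inl (sub ρ σ) (sub ρ Δ)
  | inr σ Δ => inr (sub ρ σ) (sub ρ Δ)

theorem ren_ren (ξ ζ : ℕ → ℕ) (t : Tm) : ren ξ (ren ζ t) = ren (ξ ∘ ζ) t := by
  induction t generalizing ξ ζ <;> simp_all [ren]

theorem sub_ren (ρ : ℕ → Tm) (ξ : ℕ → ℕ) (t : Tm) : sub ρ (ren ξ t) = sub (ρ ∘ ξ) t := by
  have up_comp : ∀ ρ : ℕ → Tm, ∀ ξ, up ρ ∘ upRen ξ = up (ρ ∘ ξ) := fun ρ ξ =>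
    funext fun n => by cases n <;> rfl
  induction t generalizing ρ ξ <;> simp_all [ren, sub]

theorem ren_sub (ξ : ℕ → ℕ) (ρ : ℕ → Tm) (t : Tm) : ren ξ (sub ρ t) = sub (ren ξ ∘ ρ) t := by
  have up_comp : ∀ ρ : ℕ → Tm, ∀ ξ, ren (upRen ξ) ∘ up ρ = up (ren ξ ∘ ρ) := fun ρ ξ =>
    funext fun n => by cases n <;> simp [up, ren, ren_ren]
  induction t generalizing ρ ξ <;> simp_all [ren, sub]

theorem sub_sub (ρ ρ' : ℕ → Tm) (t : Tm) : sub ρ (sub ρ' t) = sub (sub ρ ∘ ρ') t := by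
  have up_comp : ∀ ρ ρ' : ℕ → Tm, sub (up ρ) ∘ up ρ' = up (sub ρ ∘ ρ') := fun ρ ρ' =>
    funext fun n => by cases n <;> simp [up, sub, sub_ren, ren_sub, Function.comp_def]
  induction t generalizing ρ ρ' <;> simp_all [sub]

theorem sub_var_eq_self (t : Tm) : sub var t = t := by
  have up_var : up var = var := funext fun n => by cases n <;> rfl
  induction t <;> simp_all [sub]

theorem ren_eq_sub (ξ : ℕ → ℕ) (t : Tm) : ren ξ t = sub (var ∘ ξ) t := by
  have up_comp : ∀ ξ, up (var ∘ ξ) = var ∘ upRen ξ := fun ξ => funext fun n => by cases n <;> rfl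
  induction t generalizing ξ <;> simp_all [ren, sub]

def liftIdx : ℕ → ℕ → ℕ
  | 0 => Nat.succ
  | c + 1 => upRen (liftIdx c)

theorem liftIdx_apply (c n : ℕ) : liftIdx c n = if n < c then n else n + 1 := by
  induction c generalizing n with
  | zero => rfl
  | succ c ih =>
    cases n <;> simp only [liftIdx, upRen_zero, upRen_succ, ih] <;> split_ifs <;> omega

theorem lift_eq_ren (c : ℕ) (t : Tm) : t.lift c = t.ren (liftIdx c) := by
  induction t generalizing c with
  | var n => simp only [Tm.lift, ren, liftIdx_apply]; split_ifs <;> rfl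
  | _ => simp_all [Tm.lift, ren, liftIdx]

def substIdx (N : Tm) : ℕ → ℕ → Tm
  | 0 => scons N var
  | k + 1 => up (substIdx N k)

theorem subst_var (N : Tm) (k n : ℕ) : Tm.subst k N (var n) = substIdx N k n := by
  induction k generalizing n with
  | zero => cases n <;> simp [Tm.subst, substIdx]
  | succ k ih =>
    cases n with
    | zero => simp [Tm.subst, substIdx, up]
    | succ n =>
      simp only [substIdx, up, scons_succ, ← ih, Tm.subst]
      split_ifs <;> simp_all [ren, Function.iterate_succ_apply', lift_eq_ren, liftIdx]
      omega

theorem subst_eq_sub (k : ℕ) (N t : Tm) : Tm.subst k N t = t.sub (substIdx N k) := by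
  induction t generalizing k with
  | var n => exact subst_var N k n
  | _ => simp_all [Tm.subst, sub, substIdx]

theorem sub_subst_zero (ρ : ℕ → Tm) (a b : Tm) :
    sub ρ (Tm.subst 0 a b) = Tm.subst 0 (sub ρ a) (sub (up ρ) b) := by
  simp only [subst_eq_sub, substIdx, sub_sub]
  congr 1
  funext n
  cases n <;> simp [up, sub, sub_ren, sub_var_eq_self]

theorem ren_subst_zero (ξ : ℕ → ℕ) (a b : Tm) :
    ren ξ (Tm.subst 0 a b) = Tm.subst 0 (ren ξ a) (ren (upRen ξ) b) := by
  simp only [ren_eq_sub, sub_subst_zero]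
  congr 2
  funext n
  cases n <;> rfl

/-! ## Confluence -/

/-- Unlike `→_Δ`, parallel reduction puts no essence side condition on (co)pairs: containing
`→_Δ` is all the confluence argument needs. -/
inductive Par : Tm → Tm → Prop
  | type : Par type type
  | const (c : ℕ) : Par (const c) (const c)
  | var (n : ℕ) : Par (var n) (var n)
  | pi {σ σ' τ τ' : Tm} : Par σ σ' → Par τ τ' → Par (pi σ τ) (pi σ' τ')
  | rarr {σ σ' τ τ' : Tm} : Par σ σ' → Par τ τ' → Par (rarr σ τ) (rarr σ' τ')
  | inter {σ σ' τ τ' : Tm} : Par σ σ' → Par τ τ' → Par (inter σ τ) (inter σ' τ')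
  | union {σ σ' τ τ' : Tm} : Par σ σ' → Par τ τ' → Par (union σ τ) (union σ' τ')
  | lam {σ σ' Δ Δ' : Tm} : Par σ σ' → Par Δ Δ' → Par (lam σ Δ) (lam σ' Δ')
  | rlam {σ σ' Δ Δ' : Tm} : Par σ σ' → Par Δ Δ' → Par (rlam σ Δ) (rlam σ' Δ')
  | app {f f' a a' : Tm} : Par f f' → Par a a' → Par (app f a) (app f' a')
  | rapp {f f' a a' : Tm} : Par f f' → Par a a' → Par (rapp f a) (rapp f' a')
  | pair {a a' b b' : Tm} : Par a a' → Par b b' → Par (pair a b) (pair a' b')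
  | copair {a a' b b' : Tm} : Par a a' → Par b b' → Par (copair a b) (copair a' b')
  | prl {a a' : Tm} : Par a a' → Par (prl a) (prl a')
  | prr {a a' : Tm} : Par a a' → Par (prr a) (prr a')
  | inl {σ σ' a a' : Tm} : Par σ σ' → Par a a' → Par (inl σ a) (inl σ' a')
  | inr {σ σ' a a' : Tm} : Par σ σ' → Par a a' → Par (inr σ a) (inr σ' a')
  | beta {σ b b' a a' : Tm} : Par b b' → Par a a' → Par (app (lam σ b) a) (Tm.subst 0 a' b')
  | rbeta {σ b b' a a' : Tm} : Par b b' → Par a a' → Par (rapp (rlam σ b) a) (Tm.subst 0 a' b')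
  | prl_pair {a a' b : Tm} : Par a a' → Par (prl (pair a b)) a'
  | prr_pair {a b b' : Tm} : Par b b' → Par (prr (pair a b)) b'
  | copair_inl {f f' g x x' σ : Tm} :
      Par f f' → Par x x' → Par (app (copair f g) (inl σ x)) (app f' x')
  | copair_inr {f g g' x x' σ : Tm} :
      Par g g' → Par x x' → Par (app (copair f g) (inr σ x)) (app g' x')

theorem Par.refl : ∀ t : Tm, Par t t
  | .type => .type
  | .const c => .const c
  | .var n => .var n
  | .pi σ τ => .pi (.refl σ) (.refl τ)
  | .rarr σ τ => .rarr (.refl σ) (.refl τ)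
  | .inter σ τ => .inter (.refl σ) (.refl τ)
  | .union σ τ => .union (.refl σ) (.refl τ)
  | .lam σ Δ => .lam (.refl σ) (.refl Δ)
  | .rlam σ Δ => .rlam (.refl σ) (.refl Δ)
  | .app f a => .app (.refl f) (.refl a)
  | .rapp f a => .rapp (.refl f) (.refl a)
  | .pair a b => .pair (.refl a) (.refl b)
  | .copair a b => .copair (.refl a) (.refl b)
  | .prl a => .prl (.refl a)
  | .prr a => .prr (.refl a)
  | .inl σ a => .inl (.refl σ) (.refl a)
  | .inr σ a => .inr (.refl σ) (.refl a)

theorem Par.ren {t u : Tm} (h : Par t u) (ξ : ℕ → ℕ) : Par (t.ren ξ) (u.ren ξ) := by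
  induction h generalizing ξ with
  | beta _ _ ih₁ ih₂ => rw [ren_subst_zero]; exact .beta (ih₁ _) (ih₂ _)
  | rbeta _ _ ih₁ ih₂ => rw [ren_subst_zero]; exact .rbeta (ih₁ _) (ih₂ _)
  | copair_inl _ _ ih₁ ih₂ => exact .copair_inl (ih₁ _) (ih₂ _)
  | copair_inr _ _ ih₁ ih₂ => exact .copair_inr (ih₁ _) (ih₂ _)
  | _ => constructor <;> simp_all

theorem Par.sub {t u : Tm} (h : Par t u) {ρ ρ' : ℕ → Tm} (hρ : ∀ n, Par (ρ n) (ρ' n)) :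
    Par (t.sub ρ) (u.sub ρ') := by
  have up_par : ∀ {ρ ρ' : ℕ → Tm}, (∀ n, Par (ρ n) (ρ' n)) → ∀ n, Par (up ρ n) (up ρ' n) :=
    fun hρ n => by cases n with
      | zero => exact .var 0
      | succ n => exact (hρ n).ren _
  induction h generalizing ρ ρ' with
  | var n => exact hρ n
  | beta _ _ ih₁ ih₂ => rw [sub_subst_zero]; exact .beta (ih₁ (up_par hρ)) (ih₂ hρ)
  | rbeta _ _ ih₁ ih₂ => rw [sub_subst_zero]; exact .rbeta (ih₁ (up_par hρ)) (ih₂ hρ)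
  | copair_inl _ _ ih₁ ih₂ => exact .copair_inl (ih₁ hρ) (ih₂ hρ)
  | copair_inr _ _ ih₁ ih₂ => exact .copair_inr (ih₁ hρ) (ih₂ hρ)
  | _ => constructor <;> simp_all

theorem Par.subst_zero {a a' b b' : Tm} (hb : Par b b') (ha : Par a a') :
    Par (Tm.subst 0 a b) (Tm.subst 0 a' b') := by
  simp only [subst_eq_sub, substIdx]
  exact hb.sub fun n => by cases n <;> simp [ha, Par.refl]

def develop : Tm → Tm
  | type => type
  | pi σ τ => pi (develop σ) (develop τ)
  | rarr σ τ => rarr (develop σ) (develop τ)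
  | inter σ τ => inter (develop σ) (develop τ)
  | union σ τ => union (develop σ) (develop τ)
  | const c => const c
  | var n => var n
  | lam σ Δ => lam (develop σ) (develop Δ)
  | rlam σ Δ => rlam (develop σ) (develop Δ)
  | app (lam _ b) a => Tm.subst 0 (develop a) (develop b)
  | app (copair f _) (inl _ x) => app (develop f) (develop x)
  | app (copair _ g) (inr _ x) => app (develop g) (develop x)
  | app f a => app (develop f) (develop a)
  | rapp (rlam _ b) a => Tm.subst 0 (develop a) (develop b)
  | rapp f a => rapp (develop f) (develop a)
  | pair a b => pair (develop a) (develop b)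
  | copair a b => copair (develop a) (develop b)
  | prl (pair a _) => develop a
  | prl a => prl (develop a)
  | prr (pair _ b) => develop b
  | prr a => prr (develop a)
  | inl σ a => inl (develop σ) (develop a)
  | inr σ a => inr (develop σ) (develop a)

theorem Par.to_develop {t u : Tm} (h : Par t u) : Par u (develop t) := by
  induction h with
  | @app f _ a _ hf ha ihf iha =>
    cases f
    case lam =>
      cases hf; cases ihf with
      | lam _ hb => exact .beta hb iha
    case copair =>
      cases a
      case inl =>
        cases hf; cases ihf with
        | copair hf _ => cases ha; cases iha with
          | inl _ hx => exact .copair_inl hf hx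
      case inr =>
        cases hf; cases ihf with
        | copair _ hg => cases ha; cases iha with
          | inr _ hx => exact .copair_inr hg hx
      all_goals exact .app ihf iha
    all_goals exact .app ihf iha
  | @rapp f _ _ _ hf _ ihf iha =>
    cases f
    case rlam =>
      cases hf; cases ihf with
      | rlam _ hb => exact .rbeta hb iha
    all_goals exact .rapp ihf iha
  | @prl a _ ha iha =>
    cases a
    case pair =>
      cases ha; cases iha with
      | pair ha _ => exact .prl_pair ha
    all_goals exact .prl iha
  | @prr a _ ha iha =>
    cases a
    case pair =>
      cases ha; cases iha with
      | pair _ hb => exact .prr_pair hb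
    all_goals exact .prr iha
  | beta _ _ ih₁ ih₂ | rbeta _ _ ih₁ ih₂ => exact ih₁.subst_zero ih₂
  | prl_pair _ ih | prr_pair _ ih => exact ih
  | copair_inl _ _ ih₁ ih₂ | copair_inr _ _ ih₁ ih₂ => exact .app ih₁ ih₂
  | _ => constructor <;> assumption

/-! ## Erasure of families and kinds -/

def IsFam : Tm → Prop
  | const _ => True
  | pi σ τ | rarr σ τ | inter σ τ | union σ τ => IsFam σ ∧ IsFam τ
  | app σ _ => IsFam σ
  | _ => False

def erase : Tm → STy
  | pi σ τ | rarr σ τ => .arr (erase σ) (erase τ)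
  | inter σ τ => .prod (erase σ) (erase τ)
  | union σ τ => .sum (erase σ) (erase τ)
  | app σ _ => erase σ
  | _ => .top

def IsKind : Tm → Prop
  | type => True
  | pi σ K => IsFam σ ∧ IsKind K
  | _ => False

def domains : Tm → List STy
  | pi σ K => erase σ :: domains K
  | _ => []

theorem isFam_lift_iff (c : ℕ) (t : Tm) : IsFam (t.lift c) ↔ IsFam t := by
  induction t generalizing c with
  | var n => simp only [Tm.lift]; split_ifs <;> rfl
  | _ => simp_all [Tm.lift, IsFam]

theorem erase_lift (c : ℕ) (t : Tm) : erase (t.lift c) = erase t := by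
  induction t generalizing c with
  | var n => simp only [Tm.lift]; split_ifs <;> rfl
  | _ => simp_all [Tm.lift, erase]

theorem IsFam.subst {t : Tm} (h : IsFam t) (k : ℕ) (N : Tm) :
    IsFam (Tm.subst k N t) ∧ erase (Tm.subst k N t) = erase t := by
  induction t generalizing k <;> simp_all [Tm.subst, IsFam, erase]

theorem IsFam.erase_subst_lift {ρ : Tm} (h : ρ.IsFam) (X : Tm) :
    (Tm.subst 0 X (ρ.lift 1)).erase = ρ.erase := by
  rw [(((isFam_lift_iff 1 ρ).mpr h).subst 0 X).2, erase_lift]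

theorem IsKind.subst {K : Tm} (h : IsKind K) (k : ℕ) (N : Tm) :
    IsKind (Tm.subst k N K) ∧ domains (Tm.subst k N K) = domains K := by
  induction K generalizing k <;> simp_all [Tm.subst, IsKind, domains, IsFam.subst]

theorem Par.isFam {t u : Tm} (h : Par t u) (ht : IsFam t) : IsFam u ∧ erase u = erase t := by
  induction h <;> simp_all [IsFam, erase]

theorem Par.isKind {t u : Tm} (h : Par t u) (ht : IsKind t) :
    IsKind u ∧ domains u = domains t := by
  induction h with
  | pi hσ _ _ ih => simp_all [IsKind, domains, hσ.isFam]
  | _ => simp_all [IsKind]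

end Tm

theorem Step.par {t u : Tm} (h : Step t u) : Tm.Par t u := by
  induction h with
  | beta => exact .beta (.refl _) (.refl _)
  | rbeta => exact .rbeta (.refl _) (.refl _)
  | prl => exact .prl_pair (.refl _)
  | prr => exact .prr_pair (.refl _)
  | coInl => exact .copair_inl (.refl _) (.refl _)
  | coInr => exact .copair_inr (.refl _) (.refl _)
  | piL _ ih | rarrL _ ih | interL _ ih | unionL _ ih | lamL _ ih | rlamL _ ih | appL _ ih
  | rappL _ ih | inlL _ ih | inrL _ ih | piR _ ih | rarrR _ ih | interR _ ih | unionR _ ih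
  | lamR _ ih | rlamR _ ih | appR _ ih | rappR _ ih | inlR _ ih | inrR _ ih =>
    constructor <;> first | exact ih | exact .refl _
  | prlC _ ih => exact .prl ih
  | prrC _ ih => exact .prr ih
  | pairC _ _ _ ih₁ ih₂ => exact .pair ih₁ ih₂
  | copairC _ _ _ ih₁ ih₂ => exact .copair ih₁ ih₂

theorem DefEq.join {a b : Tm} (h : DefEq a b) : Join (ReflTransGen Tm.Par) a b := by
  have hequiv := equivalence_join_reflTransGen (r := Tm.Par) fun t _ _ hu hv =>
    ⟨t.develop, .single hu.to_develop, .single hv.to_develop⟩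
  induction h with
  | rel h => exact ⟨_, .single h.par, .refl⟩
  | refl a => exact hequiv.refl a
  | symm _ ih => exact hequiv.symm ih
  | trans _ _ ih₁ ih₂ => exact hequiv.trans ih₁ ih₂

theorem DefEq.eq_of_par {β : Type} {P : Tm → Prop} {f : Tm → β}
    (hpar : ∀ {t u}, Tm.Par t u → P t → P u ∧ f u = f t) {a b : Tm} (h : DefEq a b)
    (ha : P a) (hb : P b) : f a = f b := by
  have hsteps : ∀ {t u}, ReflTransGen Tm.Par t u → P t → P u ∧ f u = f t := by
    intro t u h ht
    induction h with
    | refl => exact ⟨ht, rfl⟩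
    | tail _ hs ih => exact ⟨(hpar hs ih.1).1, (hpar hs ih.1).2.trans ih.2⟩
  obtain ⟨c, hac, hbc⟩ := h.join
  rw [← (hsteps hac ha).2, (hsteps hbc hb).2]

theorem DefEq.erase_eq {σ τ : Tm} (h : DefEq σ τ) (hσ : σ.IsFam) (hτ : τ.IsFam) :
    σ.erase = τ.erase :=
  h.eq_of_par Tm.Par.isFam hσ hτ

theorem DefEq.domains_eq {K₁ K₂ : Tm} (h : DefEq K₁ K₂) (h₁ : K₁.IsKind) (h₂ : K₂.IsKind) :
    K₁.domains = K₂.domains :=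
  h.eq_of_par Tm.Par.isKind h₁ h₂

/-! ## The forgetful translation -/

namespace Tm

def toSTm : Tm → STm
  | type => .cst 0
  | pi σ τ => .pair (toSTm σ) (.lam (toSTm τ))
  | rarr σ τ | inter σ τ | union σ τ => .pair (toSTm σ) (toSTm τ)
  | const c => .cst c
  | var n => .var n
  | lam σ Δ | rlam σ Δ => .annot (.lam (toSTm Δ)) (toSTm σ)
  | app Δ₁ Δ₂ | rapp Δ₁ Δ₂ => .app (toSTm Δ₁) (toSTm Δ₂)
  | pair Δ₁ Δ₂ | copair Δ₁ Δ₂ => .pair (toSTm Δ₁) (toSTm Δ₂)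
  | prl Δ => .fst (toSTm Δ)
  | prr Δ => .snd (toSTm Δ)
  | inl σ Δ => .annot (.inl (toSTm Δ)) (toSTm σ)
  | inr σ Δ => .annot (.inr (toSTm Δ)) (toSTm σ)

theorem toSTm_ren (ξ : ℕ → ℕ) (t : Tm) : (t.ren ξ).toSTm = t.toSTm.ren ξ := by
  induction t generalizing ξ <;> simp_all [ren, toSTm, STm.ren, STm.ren_annot]

theorem toSTm_sub (ρ : ℕ → Tm) (t : Tm) : (t.sub ρ).toSTm = t.toSTm.sub (toSTm ∘ ρ) := by
  have up_comp : ∀ ρ : ℕ → Tm, toSTm ∘ up ρ = STm.up (toSTm ∘ ρ) := fun ρ =>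
    funext fun n => by cases n <;> simp [up, STm.up, toSTm, toSTm_ren]
  induction t generalizing ρ <;> simp_all [sub, toSTm, STm.sub, STm.sub_annot]

theorem toSTm_subst_zero (a b : Tm) :
    (Tm.subst 0 a b).toSTm = b.toSTm.sub (scons a.toSTm STm.var) := by
  rw [subst_eq_sub, toSTm_sub]
  congr 1
  funext n
  cases n <;> rfl

end Tm

open STm in
theorem Step.toSTm {t u : Tm} (h : Step t u) : TransGen STm.Step t.toSTm u.toSTm := by
  induction h with
  | beta | rbeta =>
    refine .tail (.single (.appL (.annot_beta _ _))) ?_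
    rw [Tm.toSTm_subst_zero]
    exact .beta
  | prl => exact .single .fst_pair
  | prr => exact .single .snd_pair
  | coInl => exact .tail (.single (.appR (.annot_beta _ _))) .case_inl
  | coInr => exact .tail (.single (.appR (.annot_beta _ _))) .case_inr
  | piL _ ih | rarrL _ ih | interL _ ih | unionL _ ih => exact transGen_map .pairL ih
  | piR _ ih => exact transGen_map (fun h => .pairR (.lam h)) ih
  | rarrR _ ih | interR _ ih | unionR _ ih => exact transGen_map .pairR ih
  | lamL _ ih | rlamL _ ih | inlL _ ih | inrL _ ih => exact transGen_map (.annotR _) ih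
  | lamR _ ih | rlamR _ ih => exact transGen_map (fun h => .annotL _ (.lam h)) ih
  | inlR _ ih => exact transGen_map (fun h => .annotL _ (.inl h)) ih
  | inrR _ ih => exact transGen_map (fun h => .annotL _ (.inr h)) ih
  | appL _ ih | rappL _ ih => exact transGen_map .appL ih
  | appR _ ih | rappR _ ih => exact transGen_map .appR ih
  | prlC _ ih => exact transGen_map .fst ih
  | prrC _ ih => exact transGen_map .snd ih
  | pairC _ _ _ ih₁ ih₂ | copairC _ _ _ ih₁ ih₂ =>
    exact (transGen_map .pairL ih₁).trans (transGen_map .pairR ih₂)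

theorem SNTm.of_toSTm {t : Tm} (h : t.toSTm.SN) : SNTm t :=
  acc_of_map Tm.toSTm (fun hs => transGen_swap.mpr hs.toSTm) h.transGen

/-! ## Typability of the translation -/

open STm (HasType)

def eraseCtx (Γ : Ctx) : List STy := Γ.map Tm.erase

def SigInv (S : Sig) : Prop :=
  (∀ a K, SigEntry.kd a K ∈ S → K.IsKind) ∧ ∀ c σ, SigEntry.ty c σ ∈ S → σ.IsFam

def CtxInv (Γ : Ctx) : Prop :=
  ∀ i σ, Γ[i]? = some σ → σ.IsFam ∧ ∃ A, HasType (eraseCtx (Γ.drop (i + 1))) σ.toSTm A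

structure EnvInv (S : Sig) (Γ : Ctx) : Prop where
  sig : SigInv S
  ctx : CtxInv Γ

structure KindInv (S : Sig) (Γ : Ctx) (K : Tm) : Prop where
  env : EnvInv S Γ
  isKind : K.IsKind
  typed : ∃ A, HasType (eraseCtx Γ) K.toSTm A

structure FamInv (S : Sig) (Γ : Ctx) (σ K : Tm) : Prop where
  env : EnvInv S Γ
  isFam : σ.IsFam
  isKind : K.IsKind
  typed : ∃ B, HasType (eraseCtx Γ) σ.toSTm (K.domains.foldr .arr B)

structure ObjInv (S : Sig) (Γ : Ctx) (Δ σ : Tm) : Prop where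
  env : EnvInv S Γ
  isFam : σ.IsFam
  typed : HasType (eraseCtx Γ) Δ.toSTm σ.erase

theorem CtxInv.nil : CtxInv [] := fun _ _ h => by simp at h

theorem CtxInv.cons {Γ : Ctx} {σ : Tm} {A : STy} (hΓ : CtxInv Γ) (hσ : σ.IsFam)
    (hA : HasType (eraseCtx Γ) σ.toSTm A) : CtxInv (σ :: Γ) := by
  rintro (_ | i) τ h
  · cases h
    exact ⟨hσ, A, hA⟩
  · exact hΓ i τ h

theorem CtxInv.tail {Γ : Ctx} {σ : Tm} (h : CtxInv (σ :: Γ)) : CtxInv Γ :=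
  fun i τ hτ => h (i + 1) τ hτ

theorem CtxInv.head {Γ : Ctx} {σ : Tm} (h : CtxInv (σ :: Γ)) :
    σ.IsFam ∧ ∃ A, HasType (eraseCtx Γ) σ.toSTm A :=
  h 0 σ rfl

theorem VarTy.inv {Γ : Ctx} {n : ℕ} {σ : Tm} (h : VarTy Γ n σ) (hΓ : CtxInv Γ) :
    σ.IsFam ∧ (eraseCtx Γ)[n]? = some σ.erase := by
  induction h with
  | zero => simp [eraseCtx, Tm.isFam_lift_iff, Tm.erase_lift, hΓ.head.1]
  | succ _ ih =>
    obtain ⟨hσ, hn⟩ := ih hΓ.tail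
    simpa [eraseCtx, Tm.isFam_lift_iff, Tm.erase_lift, hσ] using hn

theorem EnvInv.tail {S : Sig} {Γ : Ctx} {σ : Tm} (h : EnvInv S (σ :: Γ)) : EnvInv S Γ :=
  ⟨h.sig, h.ctx.tail⟩

theorem SigInv.nil : SigInv [] := by simp [SigInv]

theorem SigInv.cons_kd {S : Sig} {a : ℕ} {K : Tm} (hS : SigInv S) (hK : K.IsKind) :
    SigInv (.kd a K :: S) := by
  refine ⟨fun _ _ h => ?_, fun _ _ h => ?_⟩ <;> rcases List.mem_cons.mp h with h | h
  · cases h; exact hK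
  · exact hS.1 _ _ h
  · cases h
  · exact hS.2 _ _ h

theorem SigInv.cons_ty {S : Sig} {c : ℕ} {σ : Tm} (hS : SigInv S) (hσ : σ.IsFam) :
    SigInv (.ty c σ :: S) := by
  refine ⟨fun _ _ h => ?_, fun _ _ h => ?_⟩ <;> rcases List.mem_cons.mp h with h | h
  · cases h
  · exact hS.1 _ _ h
  · cases h; exact hσ
  · exact hS.2 _ _ h

theorem ObjInv.copair {S : Sig} {Γ : Ctx} {σ τ ρ Δ₁ Δ₂ : Tm}
    (h₁ : ObjInv S Γ Δ₁ (.pi σ (Tm.subst 0 (.inl (τ.lift 0) (.var 0)) (ρ.lift 1))))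
    (h₂ : ObjInv S Γ Δ₂ (.pi τ (Tm.subst 0 (.inr (σ.lift 0) (.var 0)) (ρ.lift 1))))
    (hρ : FamInv S (.union σ τ :: Γ) ρ .type) :
    ObjInv S Γ (.copair Δ₁ Δ₂) (.pi (.union σ τ) ρ) := by
  have t₁ := h₁.typed
  have t₂ := h₂.typed
  simp only [Tm.erase, hρ.isFam.erase_subst_lift] at t₁ t₂
  exact ⟨h₁.env, ⟨hρ.env.ctx.head.1, hρ.isFam⟩, .case t₁ t₂⟩

mutual

theorem SigOk.inv {S : Sig} : SigOk S → SigInv S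
  | .nil => .nil
  | .kd hS hK _ => hS.inv.cons_kd hK.inv.isKind
  | .ty hS hσ _ => hS.inv.cons_ty hσ.inv.isFam

theorem CtxOk.inv {S : Sig} {Γ : Ctx} : CtxOk S Γ → EnvInv S Γ
  | .nil hS => ⟨hS.inv, .nil⟩
  | .cons hΓ hσ =>
    have ⟨_, hσ'⟩ := hσ.inv.typed
    ⟨hΓ.inv.sig, hΓ.inv.ctx.cons hσ.inv.isFam hσ'⟩

theorem KindOk.inv {S : Sig} {Γ : Ctx} {K : Tm} : KindOk S Γ K → KindInv S Γ K
  | .type hΓ => ⟨hΓ.inv, trivial, .top, .cst⟩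
  | .pi hσ hK =>
    have ⟨_, hσ'⟩ := hσ.inv.typed
    have ⟨_, hK'⟩ := hK.inv.typed
    ⟨hσ.inv.env, ⟨hσ.inv.isFam, hK.inv.isKind⟩, _, .pair hσ' (.lam hK')⟩

theorem FamTy.inv {S : Sig} {Γ : Ctx} {σ K : Tm} : FamTy S Γ σ K → FamInv S Γ σ K
  | .const hΓ hK => ⟨hΓ.inv, trivial, hΓ.inv.sig.1 _ _ hK, .top, .cst⟩
  | .pi hσ hτ =>
    have ⟨_, hσ'⟩ := hσ.inv.typed
    have ⟨_, hτ'⟩ := hτ.inv.typed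
    ⟨hσ.inv.env, ⟨hσ.inv.isFam, hτ.inv.isFam⟩, trivial, _, .pair hσ' (.lam hτ')⟩
  | .app hσ hΔ =>
    have ⟨_, hσ'⟩ := hσ.inv.typed
    have hK := hσ.inv.isKind.2.subst 0 _
    ⟨hσ.inv.env, hσ.inv.isFam, hK.1, _, by rw [hK.2]; exact .app hσ' hΔ.inv.typed⟩
  | .rarr hσ hτ | .inter hσ hτ | .union hσ hτ =>
    have ⟨_, hσ'⟩ := hσ.inv.typed
    have ⟨_, hτ'⟩ := hτ.inv.typed
    ⟨hσ.inv.env, ⟨hσ.inv.isFam, hτ.inv.isFam⟩, trivial, _, .pair hσ' hτ'⟩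
  | .conv hσ hK hconv =>
    have ⟨_, hσ'⟩ := hσ.inv.typed
    ⟨hσ.inv.env, hσ.inv.isFam, hK.inv.isKind, _,
      hconv.domains_eq hσ.inv.isKind hK.inv.isKind ▸ hσ'⟩

theorem ObjTy.inv {S : Sig} {Γ : Ctx} {Δ σ : Tm} : ObjTy S Γ Δ σ → ObjInv S Γ Δ σ
  | .const hΓ hσ => ⟨hΓ.inv, hΓ.inv.sig.2 _ _ hσ, .cst⟩
  | .var hΓ hn =>
    have ⟨hσ, hn⟩ := hn.inv hΓ.inv.ctx
    ⟨hΓ.inv, hσ, .var hn⟩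
  | .lam hΔ =>
    have ⟨hσ, _, hσ'⟩ := hΔ.inv.env.ctx.head
    ⟨hΔ.inv.env.tail, ⟨hσ, hΔ.inv.isFam⟩, .annot (.lam hΔ.inv.typed) hσ'⟩
  | .rlam hΔ _ =>
    have ⟨hσ, _, hσ'⟩ := hΔ.inv.env.ctx.head
    have hΔ' : HasType (eraseCtx (_ :: Γ)) _ _ := Tm.erase_lift 0 _ ▸ hΔ.inv.typed
    ⟨hΔ.inv.env.tail, ⟨hσ, (Tm.isFam_lift_iff 0 _).mp hΔ.inv.isFam⟩, .annot (.lam hΔ') hσ'⟩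
  | .app hΔ₁ hΔ₂ =>
    have hτ := hΔ₁.inv.isFam.2.subst 0 _
    ⟨hΔ₁.inv.env, hτ.1, hτ.2 ▸ .app hΔ₁.inv.typed hΔ₂.inv.typed⟩
  | .rapp hΔ₁ hΔ₂ => ⟨hΔ₁.inv.env, hΔ₁.inv.isFam.2, .app hΔ₁.inv.typed hΔ₂.inv.typed⟩
  | .pair hΔ₁ hΔ₂ _ =>
    ⟨hΔ₁.inv.env, ⟨hΔ₁.inv.isFam, hΔ₂.inv.isFam⟩, .pair hΔ₁.inv.typed hΔ₂.inv.typed⟩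
  | .prl hΔ => ⟨hΔ.inv.env, hΔ.inv.isFam.1, .fst hΔ.inv.typed⟩
  | .prr hΔ => ⟨hΔ.inv.env, hΔ.inv.isFam.2, .snd hΔ.inv.typed⟩
  | .inl hΔ hU =>
    have ⟨_, hU'⟩ := hU.inv.typed
    have ⟨_, _, hτ'⟩ := hU'.pair_inv
    ⟨hΔ.inv.env, hU.inv.isFam, .annot (.inl hΔ.inv.typed) hτ'⟩
  | .inr hΔ hU =>
    have ⟨_, hU'⟩ := hU.inv.typed
    have ⟨⟨_, hσ'⟩, _⟩ := hU'.pair_inv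
    ⟨hΔ.inv.env, hU.inv.isFam, .annot (.inr hΔ.inv.typed) hσ'⟩
  | .copair hΔ₁ hΔ₂ hρ _ => hΔ₁.inv.copair hΔ₂.inv hρ.inv
  | .conv hΔ hτ hconv =>
    ⟨hΔ.inv.env, hτ.inv.isFam, hconv.erase_eq hΔ.inv.isFam hτ.inv.isFam ▸ hΔ.inv.typed⟩

end

/-- Strong normalization of LF_Δ: every well-formed kind, family and object
    is strongly normalizing with respect to →_Δ. -/
theorem lfdelta_strong_normalization :
    (∀ (S : Sig) (Γ : Ctx) (K : Tm), KindOk S Γ K → SNTm K) ∧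
    (∀ (S : Sig) (Γ : Ctx) (σ K : Tm), FamTy S Γ σ K → SNTm σ) ∧
    (∀ (S : Sig) (Γ : Ctx) (Δ σ : Tm), ObjTy S Γ Δ σ → SNTm Δ) := by
  refine ⟨fun _ _ _ h => ?_, fun _ _ _ _ h => ?_, fun _ _ _ _ h => ?_⟩
  · obtain ⟨_, hK⟩ := h.inv.typed
    exact .of_toSTm hK.sn
  · obtain ⟨_, hσ⟩ := h.inv.typed
    exact .of_toSTm hσ.sn
  · exact .of_toSTm h.inv.typed.sn

end LFDelta
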